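/- Let V ∈ R^{n×k} have full column rank with Gram matrix satisfying (V^T V)^{-1} = C(β_1, …, β_k) (the tridiagonal matrix defined from nonzero reals β_i), where the columns of V are x^{j+i-1} − x^{k'} for consecutive iterates x with x^{i+1} − x^i = t_i and ‖t_i‖_2^2 = β_i. Then V (V^T V)^{-1} V^T = Σ_{i=1}^{k} t_{i}t_{i}^T / β_{i}, i.e., the orthogonal projection onto Range(V) equals the sum of rank-one projections onto the successive difference vectors t_i = x^{i+1} − x^i. -/

import Mathlib

/-!
Write `S` for the lower shift matrix. The columns of `S - 1` are `e_{m+1} - e_m` (with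
`e_k := 0`), and `C(β) = (S - 1) diag(β⁻¹) (S - 1)ᵀ`. Multiplying by `S - 1` telescopes the
columns `x^i - x^k` of `V` into the consecutive differences `t_i = x^{i+1} - x^i`, the common
endpoint `x^k` cancelling. Hence `V C Vᵀ = (V (S - 1)) diag(β⁻¹) (V (S - 1))ᵀ = ∑ t_i t_iᵀ / β_i`.
-/

open Matrix

theorem mul_diagonal_mul_transpose_eq_sum_vecMulVec {R m k : Type*} [CommSemiring R] [Fintype k]
    [DecidableEq k] (A : Matrix m k R) (w : k → R) :
    A * diagonal w * Aᵀ = ∑ j, w j • vecMulVec (Aᵀ j) (Aᵀ j) := by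
  ext l l'
  simp only [mul_apply, diagonal_apply, mul_ite, mul_zero, Finset.sum_ite_eq', Finset.mem_univ,
    if_true, transpose_apply, Matrix.sum_apply, Matrix.smul_apply, vecMulVec_apply, smul_eq_mul]
  exact Finset.sum_congr rfl fun j _ => by ring

theorem Fin.sum_ite_val_add_one_eq {M : Type*} [AddCommMonoid M] {k : ℕ} (i : Fin k)
    (f : Fin k → M) :
    ∑ m : Fin k, (if (m : ℕ) + 1 = i then f m else 0) =
      if h : (i : ℕ) = 0 then 0 else f ⟨i - 1, by omega⟩ := by
  split_ifs with h
  · exact Finset.sum_eq_zero fun m _ => if_neg (by omega)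
  · simp_rw [show ∀ m : Fin k, (m : ℕ) + 1 = i ↔ m = ⟨i - 1, by omega⟩ from
      fun m => by simp only [Fin.ext_iff]; omega]
    exact Fintype.sum_ite_eq' _ _

theorem Fin.sum_ite_add_one_eq_val {M : Type*} [AddCommMonoid M] {k : ℕ} (i : Fin k)
    (f : Fin k → M) :
    ∑ m : Fin k, (if (i : ℕ) + 1 = m then f m else 0) =
      if h : (i : ℕ) + 1 < k then f ⟨i + 1, h⟩ else 0 := by
  split_ifs with h
  · simp_rw [show ∀ m : Fin k, (i : ℕ) + 1 = m ↔ m = ⟨i + 1, h⟩ from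
      fun m => by simp only [Fin.ext_iff]; omega]
    exact Fintype.sum_ite_eq' _ _
  · exact Finset.sum_eq_zero fun m _ => if_neg (by omega)

def lowerShift (R : Type*) [Zero R] [One R] (k : ℕ) : Matrix (Fin k) (Fin k) R :=
  of fun i j => if (j : ℕ) + 1 = i then 1 else 0

section lowerShift

variable {R : Type*} {k : ℕ}

theorem lowerShift_mul_apply [NonAssocSemiring R] {n : Type*} (M : Matrix (Fin k) n R)
    (i : Fin k) (j : n) :
    (lowerShift R k * M) i j = if h : (i : ℕ) = 0 then 0 else M ⟨i - 1, by omega⟩ j := by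
  simp only [mul_apply, lowerShift, of_apply, ite_mul, one_mul, zero_mul]
  exact Fin.sum_ite_val_add_one_eq i (M · j)

theorem mul_lowerShift_apply [NonAssocSemiring R] {m : Type*} (M : Matrix m (Fin k) R) (l : m)
    (i : Fin k) :
    (M * lowerShift R k) l i = if h : (i : ℕ) + 1 < k then M l ⟨i + 1, h⟩ else 0 := by
  simp only [mul_apply, lowerShift, of_apply, mul_ite, mul_one, mul_zero]
  exact Fin.sum_ite_add_one_eq_val i (M l)

theorem mul_lowerShift_transpose_apply [CommSemiring R] {m : Type*} (M : Matrix m (Fin k) R)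
    (l : m) (j : Fin k) :
    (M * (lowerShift R k)ᵀ) l j = if h : (j : ℕ) = 0 then 0 else M l ⟨j - 1, by omega⟩ := by
  rw [← transpose_apply (M * _), transpose_mul, transpose_transpose, lowerShift_mul_apply]
  rfl

/-- The Laplacian of the path `0 — 1 — ⋯ — k` with weight `w m` on the edge `{m, m + 1}`, with
the vertex `k` deleted; for `w = β⁻¹` this is the matrix `C(β)`. -/
def groundedPathLaplacian [Ring R] (w : Fin k → R) : Matrix (Fin k) (Fin k) R :=
  of fun i j =>
    if i = j then (if (i : ℕ) = 0 then w i else w ⟨(i : ℕ) - 1, by omega⟩ + w i)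
    else if (i : ℕ) + 1 = (j : ℕ) then -w i
    else if (j : ℕ) + 1 = (i : ℕ) then -w j
    else 0

theorem groundedPathLaplacian_eq [CommRing R] (w : Fin k → R) :
    groundedPathLaplacian w = (lowerShift R k - 1) * diagonal w * (lowerShift R k - 1)ᵀ := by
  rw [transpose_sub, transpose_one, sub_mul, one_mul, sub_mul, mul_sub, mul_sub, mul_one,
    mul_one, Matrix.mul_assoc]
  ext i j
  simp only [Matrix.sub_apply, lowerShift_mul_apply, mul_lowerShift_transpose_apply,
    diagonal_apply, groundedPathLaplacian, of_apply]
  grind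

theorem mul_lowerShift_sub_one_of_apply_eq_sub_last [Ring R] {m : Type*}
    (z : Fin (k + 1) → m → R) (V : Matrix m (Fin k) R)
    (hV : ∀ l i, V l i = z i.castSucc l - z (Fin.last k) l) :
    V * (lowerShift R k - 1) = of fun l i => z i.succ l - z i.castSucc l := by
  rw [Matrix.mul_sub, Matrix.mul_one]
  ext l i
  rw [Matrix.sub_apply, mul_lowerShift_apply, of_apply, hV]
  split_ifs with h
  · rw [hV, show (⟨i + 1, h⟩ : Fin k).castSucc = i.succ from rfl]
    exact sub_sub_sub_cancel_right _ _ _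
  · rw [show i.succ = Fin.last k from Fin.ext (by simp only [Fin.val_succ, Fin.val_last]; omega)]
    rw [zero_sub, neg_sub]

end lowerShift

theorem stmt15_general {n k : ℕ} (z : Fin (k + 1) → (Fin n → ℝ))
    (V : Matrix (Fin n) (Fin k) ℝ)
    (hVcol : ∀ (l : Fin n) (i : Fin k), V l i = z i.castSucc l - z (Fin.last k) l)
    (β : Fin k → ℝ)
    (C : Matrix (Fin k) (Fin k) ℝ)
    (hC : ∀ i j : Fin k, C i j =
      if i = j then
        (if (i : ℕ) = 0 then (β i)⁻¹
         else (β ⟨(i : ℕ) - 1, lt_of_le_of_lt (Nat.sub_le _ _) i.isLt⟩)⁻¹ + (β i)⁻¹)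
      else if (i : ℕ) + 1 = (j : ℕ) then -(β i)⁻¹
      else if (j : ℕ) + 1 = (i : ℕ) then -(β j)⁻¹
      else 0)
    (hinv : (Vᵀ * V)⁻¹ = C) :
    V * (Vᵀ * V)⁻¹ * Vᵀ =
      ∑ i : Fin k, (β i)⁻¹ •
        Matrix.vecMulVec (z i.succ - z i.castSucc) (z i.succ - z i.castSucc) := by
  have hC_eq : C = groundedPathLaplacian fun i => (β i)⁻¹ := ext fun i j => hC i j
  have hproj : V * (Vᵀ * V)⁻¹ * Vᵀ = (V * (lowerShift ℝ k - 1)) *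
      diagonal (fun i => (β i)⁻¹) * (V * (lowerShift ℝ k - 1))ᵀ := by
    rw [hinv, hC_eq, groundedPathLaplacian_eq, transpose_mul]
    simp only [Matrix.mul_assoc]
  rw [hproj, mul_diagonal_mul_transpose_eq_sum_vecMulVec,
    mul_lowerShift_sub_one_of_apply_eq_sub_last z V hVcol]
  rfl

theorem stmt15 {n k : ℕ} (z : Fin (k + 1) → (Fin n → ℝ))
    (V : Matrix (Fin n) (Fin k) ℝ)
    (hVcol : ∀ (l : Fin n) (i : Fin k), V l i = z i.castSucc l - z (Fin.last k) l)
    (hVrank : V.rank = k)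
    (β : Fin k → ℝ) (hβ0 : ∀ i, β i ≠ 0)
    (hβ : ∀ i : Fin k,
      β i = (z i.succ - z i.castSucc) ⬝ᵥ (z i.succ - z i.castSucc))
    (C : Matrix (Fin k) (Fin k) ℝ)
    (hC : ∀ i j : Fin k, C i j =
      if i = j then
        (if (i : ℕ) = 0 then (β i)⁻¹
         else (β ⟨(i : ℕ) - 1, lt_of_le_of_lt (Nat.sub_le _ _) i.isLt⟩)⁻¹ + (β i)⁻¹)
      else if (i : ℕ) + 1 = (j : ℕ) then -(β i)⁻¹
      else if (j : ℕ) + 1 = (i : ℕ) then -(β j)⁻¹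
      else 0)
    (hinv : (Vᵀ * V)⁻¹ = C) :
    V * (Vᵀ * V)⁻¹ * Vᵀ =
      ∑ i : Fin k, (β i)⁻¹ •
        Matrix.vecMulVec (z i.succ - z i.castSucc) (z i.succ - z i.castSucc) :=
  stmt15_general z V hVcol β C hC hinv
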